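/- arXiv:1609.03116 — 4 statements merged into one kernel-verified Lean document; each statement's English description precedes it below -/
import Mathlib

section
/- For any strictly increasing sequence of positive integers a_1 < a_2 < ... < a_n, the quantity E(a_1,...,a_n) = 2^{n^2} / (0!·2!·4!···(2n-2)!) · ∏_{1≤i<j≤n}(a_j - a_i) · ∏_{1≤i<j≤n}(a_i + a_j - 1) is a positive integer. -/
open Finset

/-- The function `E(a_1,...,a_n)` of the paper. -/
noncomputable def Efun (n : ℕ) (a : Fin n → ℕ) : ℚ :=
  (2 ^ (n ^ 2) / ∏ i ∈ Finset.range n, (Nat.factorial (2 * i) : ℚ))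
    * ∏ p ∈ Finset.univ.filter (fun p : Fin n × Fin n => p.1 < p.2), ((a p.2 : ℚ) - (a p.1 : ℚ))
    * ∏ p ∈ Finset.univ.filter (fun p : Fin n × Fin n => p.1 < p.2),
        ((a p.1 : ℚ) + (a p.2 : ℚ) - 1)

/-!
Put `x i = a i - 1`. Then `(a j - a i)(a i + a j - 1) = y j - y i` with `y i = x i (x i + 1)`, so the
two products form the Vandermonde determinant of the `y i`. Replacing its monomial columns by the monic
polynomials `∏_{j<k} (Y - j(j+1))`, whose value at `y i` is the falling factorial
`(x i + k)(x i + k - 1)⋯(x i - k + 1)`, and splitting `2^{n^2}/∏ (2k)! = ∏_k 2^{2k+1}/(2k)!` over the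
columns turns `E` into `det [2^{2k+1} binom(x i + k, 2k)]`, an integer, positive because every factor
`(a j - a i)(a i + a j - 1)` is.

As written, `Efun` nests the second product inside the first, so it is this determinant times the
`(#pairs - 1)`-th power of the positive integer `∏ (a i + a j - 1)`.
-/

open Polynomial

theorem Finset.prod_filter_fst_lt_snd {ι M : Type*} [LinearOrder ι] [Fintype ι]
    [LocallyFiniteOrderTop ι] [CommMonoid M] (f : ι → ι → M) :
    ∏ p ∈ univ.filter (fun p : ι × ι => p.1 < p.2), f p.1 p.2 = ∏ i, ∏ j ∈ Ioi i, f i j := by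
  rw [prod_filter, Fintype.prod_prod_type]
  refine prod_congr rfl fun i _ => ?_
  rw [← filter_lt_eq_Ioi, prod_filter]

theorem Finset.prod_mul_prod_eq_prod_mul_pow_card_sub_one {ι M : Type*}
    [CommMonoid M] (s : Finset ι) (f g : ι → M) :
    ∏ i ∈ s, (f i * ∏ j ∈ s, g j) = (∏ i ∈ s, f i * g i) * (∏ j ∈ s, g j) ^ (#s - 1) := by
  rcases s.eq_empty_or_nonempty with rfl | hs
  · simp
  · rw [prod_mul_distrib, prod_mul_distrib, prod_const, mul_assoc, ← pow_succ',
      Nat.sub_add_cancel hs.card_pos]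

theorem Finset.sum_range_two_mul_add_one (n : ℕ) : ∑ i ∈ range n, (2 * i + 1) = n ^ 2 := by
  induction n with
  | zero => rfl
  | succ n ih => rw [sum_range_succ, ih]; ring

theorem descPochhammer_eval_two_mul_add {R : Type*} [CommRing R] (k : ℕ) (x : R) :
    (descPochhammer R (2 * k)).eval (x + k) = ∏ j ∈ range k, (x * (x + 1) - j * (j + 1)) := by
  induction k with
  | zero => simp
  | succ k ih =>
    rw [show 2 * (k + 1) = 2 * k + 1 + 1 by ring, descPochhammer_succ_left, eval_mul, eval_X,
      eval_comp, eval_sub, eval_X, eval_one, descPochhammer_succ_eval, Nat.cast_add_one,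
      show x + (k + 1) - 1 = x + k by ring, ih, prod_range_succ]
    push_cast
    ring

theorem Matrix.det_descPochhammer_eval_two_mul_add {R : Type*} [CommRing R] [Nontrivial R]
    {n : ℕ} (x : Fin n → R) :
    (Matrix.of fun i k : Fin n => (descPochhammer R (2 * k)).eval (x i + k)).det =
      ∏ i, ∏ j ∈ Ioi i, (x j - x i) * (x i + x j + 1) := by
  let p : Fin n → R[X] := fun k => ∏ j ∈ range k, (X - C ((j : R) * (j + 1)))
  have hp : ∀ i k : Fin n,
      (descPochhammer R (2 * k)).eval (x i + k) = (p k).eval (x i * (x i + 1)) :=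
    fun i k => by simp [p, eval_prod, descPochhammer_eval_two_mul_add]
  have hdeg : ∀ k, (p k).natDegree = k :=
    fun k => (natDegree_finsetProd_X_sub_C_eq_card _ _).trans (card_range _)
  simp_rw [hp]
  rw [← det_eval_matrixOfPolynomials_eq_det_vandermonde _ p hdeg (fun k => monic_prod_X_sub_C _ _),
    det_vandermonde]
  exact prod_congr rfl fun i _ => prod_congr rfl fun j _ => by ring

def Emat {n : ℕ} (b : Fin n → ℕ) : Matrix (Fin n) (Fin n) ℤ :=
  Matrix.of fun i k => 2 ^ (2 * (k : ℕ) + 1) * (b i + k).choose (2 * k)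

theorem Emat_det {n : ℕ} (b : Fin n → ℕ) :
    ((Emat b).det : ℚ) = 2 ^ (n ^ 2) / (∏ i ∈ range n, ((2 * i).factorial : ℚ)) *
      ∏ i, ∏ j ∈ Ioi i, (((b j : ℚ) - b i) * (b i + b j + 1)) := by
  let v : Fin n → ℚ := fun k => 2 ^ (2 * (k : ℕ) + 1) / ((2 * (k : ℕ)).factorial : ℚ)
  let A : Matrix (Fin n) (Fin n) ℚ :=
    Matrix.of fun i k => (descPochhammer ℚ (2 * k)).eval ((b i : ℚ) + k)
  have hcol : (Emat b).map (Int.cast : ℤ → ℚ) = Matrix.of fun i k => v k * A i k := by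
    ext i k
    simp only [Emat, v, A, Matrix.map_apply, Matrix.of_apply]
    push_cast
    rw [Nat.cast_choose_eq_descPochhammer_div, Nat.cast_add]
    ring
  have hv : ∏ k, v k = 2 ^ (n ^ 2) / ∏ i ∈ range n, ((2 * i).factorial : ℚ) := by
    rw [prod_div_distrib, prod_pow_eq_pow_sum, Fin.sum_univ_eq_sum_range (fun i => 2 * i + 1),
      sum_range_two_mul_add_one, Fin.prod_univ_eq_prod_range (fun i => ((2 * i).factorial : ℚ))]
  rw [Int.cast_det, hcol, Matrix.det_mul_row, hv, Matrix.det_descPochhammer_eval_two_mul_add]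

theorem Emat_det_pos {n : ℕ} {b : Fin n → ℕ} (hb : StrictMono b) : 0 < (Emat b).det := by
  have h : (0 : ℚ) < (Emat b).det := by
    rw [Emat_det]
    refine mul_pos (by positivity) (prod_pos fun i _ => prod_pos fun j hij => ?_)
    have hbij : (b i : ℚ) < b j := by exact_mod_cast hb (mem_Ioi.mp hij)
    exact mul_pos (sub_pos.mpr hbij) (by positivity)
  exact_mod_cast h

theorem Efun_pos_int (n : ℕ) (a : Fin n → ℕ) (hpos : ∀ i, 0 < a i) (hmono : StrictMono a) :
    ∃ k : ℕ, 0 < k ∧ Efun n a = (k : ℚ) := by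
  set S := univ.filter (fun p : Fin n × Fin n => p.1 < p.2) with hS
  set b : Fin n → ℕ := fun i => a i - 1
  have hab : ∀ i, (a i : ℚ) = b i + 1 := fun i => by simp [b, Nat.cast_sub (hpos i)]
  have hb : StrictMono b := fun i j hij => Nat.sub_lt_sub_right (hpos i) (hmono hij)
  set d : ℕ := (Emat b).det.toNat
  have hd : (d : ℚ) = (Emat b).det := by exact_mod_cast Int.toNat_of_nonneg (Emat_det_pos hb).le
  set m : ℕ := ∏ p ∈ S, (b p.1 + b p.2 + 1) with hm_def
  have hm : ∏ p ∈ S, ((a p.1 : ℚ) + a p.2 - 1) = m := by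
    rw [hm_def]
    push_cast
    exact prod_congr rfl fun p _ => by rw [hab, hab]; ring
  have hV : ∏ p ∈ S, ((a p.2 : ℚ) - a p.1) * (a p.1 + a p.2 - 1) =
      ∏ p ∈ S, ((b p.2 : ℚ) - b p.1) * (b p.1 + b p.2 + 1) :=
    prod_congr rfl fun p _ => by rw [hab, hab]; ring
  refine ⟨d * m ^ (#S - 1), Nat.mul_pos (Int.lt_toNat.mpr (Emat_det_pos hb)) (by positivity), ?_⟩
  rw [Efun, ← hS, prod_mul_prod_eq_prod_mul_pow_card_sub_one, hm, hV, Nat.cast_mul,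
    Nat.cast_pow, hd, Emat_det, ← prod_filter_fst_lt_snd, ← hS, mul_assoc]
end

section
/- For any strictly increasing sequence of positive integers a_1 < a_2 < ... < a_n, the quantity O(a_1,...,a_n) = 2^{n^2} / (1!·3!·5!···(2n-1)!) · ∏_{1≤i<j≤n}(a_j - a_i) · ∏_{1≤i≤j≤n}(a_i + a_j - 1) is a positive integer. -/
open Finset

/-- The function `O(a_1,...,a_n)` of the paper. -/
noncomputable def Ofun (n : ℕ) (a : Fin n → ℕ) : ℚ :=
  (2 ^ (n ^ 2) / ∏ i ∈ Finset.range n, (Nat.factorial (2 * i + 1) : ℚ))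
    * ∏ p ∈ Finset.univ.filter (fun p : Fin n × Fin n => p.1 < p.2), ((a p.2 : ℚ) - (a p.1 : ℚ))
    * ∏ p ∈ Finset.univ.filter (fun p : Fin n × Fin n => p.1 ≤ p.2),
        ((a p.1 : ℚ) + (a p.2 : ℚ) - 1)

/-!
With `b_i = 2 a_i - 1` one has `(a_j - a_i) (a_i + a_j - 1) = (b_j² - b_i²) / 4`, so
`O(a) = 2^n (∏ b_i) ∏_{i<j} (b_j² - b_i²) / ∏_{j<n} (2j+1)!`. The Vandermonde determinant of the
`b_i²` equals `det (p_j (b_i²))` for the monic `p_j = ∏_{k<j} (X - (2k+1)²)`, and for odd `b`,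
`b p_j (b²)` is `4^j` times a sum of two products of `2j+1` consecutive integers, hence a multiple
of `(2j+1)!`. Pulling these factorials out of the columns shows that `O(a)` is an integer;
positivity is clear from `a_1 < ⋯ < a_n` and `a_i ≥ 1`.
-/

open Polynomial Nat

theorem Matrix.prod_dvd_prod_mul_det_vandermonde {R : Type*} [CommRing R] {n : ℕ}
    (b c v : Fin n → R) (p : Fin n → R[X]) (h_deg : ∀ j, (p j).natDegree = j)
    (h_monic : ∀ j, (p j).Monic) (h_dvd : ∀ i j, c j ∣ b i * (p j).eval (v i)) :
    ∏ j, c j ∣ (∏ i, b i) * (vandermonde v).det := by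
  choose M hM using h_dvd
  refine ⟨(of M).det, ?_⟩
  rw [det_eval_matrixOfPolynomials_eq_det_vandermonde v p h_deg h_monic, ← det_mul_column,
    ← det_mul_row]
  exact congrArg det (ext hM)

lemma prod_range_two_mul_add_eq_prod_mul (m : ℤ) (j : ℕ) :
    ∏ i ∈ range (2 * j), (m - j + 1 + i) = ∏ k ∈ range j, (m - k) * (m + 1 + k) := by
  induction j generalizing m with
  | zero => simp
  | succ j ih =>
    rw [show 2 * (j + 1) = 2 * j + 1 + 1 by ring, prod_range_succ, prod_range_succ',
      prod_range_succ, ← ih]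
    push_cast
    ring_nf

lemma factorial_dvd_mul_prod_sq_sub_odd_sq {b : ℤ} (hb : Odd b) (j : ℕ) :
    ((2 * j + 1)! : ℤ) ∣ b * ∏ k ∈ range j, (b ^ 2 - (2 * k + 1) ^ 2) := by
  obtain ⟨m, rfl⟩ := hb
  have hsq : ∏ k ∈ range j, ((2 * m + 1) ^ 2 - (2 * k + 1) ^ 2)
      = 4 ^ j * ∏ i ∈ range (2 * j), (m - j + 1 + i) := by
    rw [prod_range_two_mul_add_eq_prod_mul, show (4 : ℤ) ^ j = ∏ _k ∈ range j, 4 by simp,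
      ← prod_mul_distrib]
    exact prod_congr rfl fun k _ => by ring
  have hsplit : (2 * m + 1) * ∏ i ∈ range (2 * j), (m - j + 1 + i)
      = ∏ i ∈ range (2 * j + 1), (m - j + i) + ∏ i ∈ range (2 * j + 1), (m - j + 1 + i) := by
    rw [prod_range_succ', prod_range_succ]
    push_cast
    ring_nf
  rw [hsq, mul_left_comm, hsplit]
  exact dvd_mul_of_dvd_right (dvd_add (factorial_coe_dvd_prod _ _)
    (factorial_coe_dvd_prod _ _)) _

lemma prod_factorial_dvd_prod_mul_prod_sq_sub {n : ℕ} (b : Fin n → ℤ) (hb : ∀ i, Odd (b i)) :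
    ∏ j : Fin n, ((2 * j + 1)! : ℤ) ∣ (∏ i, b i) * ∏ i, ∏ j ∈ Ioi i, (b j ^ 2 - b i ^ 2) := by
  have := Matrix.prod_dvd_prod_mul_det_vandermonde b (fun j => ((2 * j + 1)! : ℤ))
    (fun i => b i ^ 2) (fun j => ∏ k ∈ range j, (X - C ((2 * k + 1 : ℤ) ^ 2)))
    (fun j => by rw [natDegree_finsetProd_X_sub_C_eq_card, card_range])
    (fun j => monic_prod_X_sub_C _ _) fun i j => by
      simpa [eval_prod] using factorial_dvd_mul_prod_sq_sub_odd_sq (hb i) j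
  rwa [Matrix.det_vandermonde] at this

section
variable {α M : Type*} [CommMonoid M] [Fintype α]

lemma prod_filter_lt_eq_prod_Ioi [LinearOrder α] [LocallyFiniteOrderTop α] (f : α → α → M) :
    ∏ p ∈ univ.filter (fun p : α × α => p.1 < p.2), f p.1 p.2 = ∏ i, ∏ j ∈ Ioi i, f i j := by
  rw [prod_filter, ← univ_product_univ, prod_product]
  refine prod_congr rfl fun i _ => ?_
  rw [← prod_filter, filter_lt_eq_Ioi]

lemma prod_filter_le_eq_prod_filter_lt_mul [PartialOrder α] [DecidableLE α] [DecidableLT α]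
    (f : α → α → M) :
    ∏ p ∈ univ.filter (fun p : α × α => p.1 ≤ p.2), f p.1 p.2
      = (∏ p ∈ univ.filter (fun p : α × α => p.1 < p.2), f p.1 p.2) * ∏ i, f i i := by
  classical
  have hdiag : ∏ i, f i i = ∏ p ∈ univ.filter (fun p : α × α => p.1 = p.2), f p.1 p.2 := by
    rw [prod_filter, ← univ_product_univ, prod_product]
    simp
  rw [hdiag, ← prod_union (disjoint_filter.2 fun p _ h => h.ne), ← filter_or]
  simp_rw [le_iff_lt_or_eq]

end

lemma sq_eq_add_two_mul_choose_two (n : ℕ) : n ^ 2 = n + 2 * n.choose 2 := by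
  induction n with
  | zero => rfl
  | succ n ih => rw [Nat.choose_succ_succ, Nat.choose_one_right]; linear_combination ih

lemma two_pow_sq_eq_two_pow_mul_four_pow_card (n : ℕ) :
    (2 : ℚ) ^ (n ^ 2) = 2 ^ n * 4 ^ #(univ.filter fun p : Fin n × Fin n => p.1 < p.2) := by
  rw [← univ_product_univ, card_product_filter_lt, Finset.card_univ, Fintype.card_fin,
    sq_eq_add_two_mul_choose_two, pow_add, pow_mul]
  norm_num

section
variable {n : ℕ}

/-- `O(a)` as printed in the paper. In `Ofun` the first `∏` binds everything to its right, so
`Ofun n a = aztecO n a * P ^ (N - 1)` with `P = ∏_{i ≤ j} (a_i + a_j - 1)` and `N` the number of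
pairs `i < j` (`Ofun_eq_aztecO_mul_pow`). -/
noncomputable def aztecO (n : ℕ) (a : Fin n → ℕ) : ℚ :=
  2 ^ (n ^ 2) / (∏ i ∈ range n, ((2 * i + 1)! : ℚ))
    * (∏ p ∈ univ.filter (fun p : Fin n × Fin n => p.1 < p.2), ((a p.2 : ℚ) - a p.1))
    * ∏ p ∈ univ.filter (fun p : Fin n × Fin n => p.1 ≤ p.2), ((a p.1 : ℚ) + a p.2 - 1)

lemma aztecO_eq (a : Fin n → ℕ) :
    aztecO n a = 2 ^ n / (∏ i ∈ range n, ((2 * i + 1)! : ℚ))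
      * ((∏ i, (2 * (a i : ℚ) - 1))
        * ∏ i, ∏ j ∈ Ioi i, ((2 * (a j : ℚ) - 1) ^ 2 - (2 * (a i : ℚ) - 1) ^ 2)) := by
  have hV : ∏ p ∈ univ.filter (fun p : Fin n × Fin n => p.1 < p.2),
        ((2 * (a p.2 : ℚ) - 1) ^ 2 - (2 * (a p.1 : ℚ) - 1) ^ 2)
      = 4 ^ #(univ.filter fun p : Fin n × Fin n => p.1 < p.2)
        * ((∏ p ∈ univ.filter (fun p : Fin n × Fin n => p.1 < p.2), ((a p.2 : ℚ) - a p.1))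
          * ∏ p ∈ univ.filter (fun p : Fin n × Fin n => p.1 < p.2), ((a p.1 : ℚ) + a p.2 - 1)) := by
    rw [← prod_mul_distrib, pow_card_mul_prod]
    exact prod_congr rfl fun p _ => by ring
  have hdiag : ∏ i, ((a i : ℚ) + a i - 1) = ∏ i, (2 * (a i : ℚ) - 1) :=
    prod_congr rfl fun i _ => by ring
  rw [aztecO, prod_filter_le_eq_prod_filter_lt_mul (fun i j => (a i : ℚ) + a j - 1), hdiag,
    two_pow_sq_eq_two_pow_mul_four_pow_card, ← prod_filter_lt_eq_prod_Ioi, hV]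
  ring

lemma exists_int_aztecO_eq (a : Fin n → ℕ) : ∃ z : ℤ, aztecO n a = z := by
  obtain ⟨w, hw⟩ :=
    prod_factorial_dvd_prod_mul_prod_sq_sub (fun i => 2 * (a i : ℤ) - 1) fun i => ⟨a i - 1, by ring⟩
  refine ⟨2 ^ n * w, ?_⟩
  have hF : ∏ i ∈ range n, ((2 * i + 1)! : ℚ) ≠ 0 := by positivity
  have hw' := congrArg (Int.cast : ℤ → ℚ) hw
  push_cast at hw'
  rw [aztecO_eq, hw', Fin.prod_univ_eq_prod_range (fun i => ((2 * i + 1)! : ℚ))]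
  field_simp
  push_cast
  ring

lemma Ofun_eq_aztecO_mul_pow (hn : 2 ≤ n) (a : Fin n → ℕ) :
    Ofun n a = aztecO n a
      * (∏ p ∈ univ.filter (fun p : Fin n × Fin n => p.1 ≤ p.2), ((a p.1 : ℚ) + a p.2 - 1))
        ^ (#(univ.filter fun p : Fin n × Fin n => p.1 < p.2) - 1) := by
  have hL : #(univ.filter fun p : Fin n × Fin n => p.1 < p.2) ≠ 0 :=
    card_ne_zero.2 ⟨(⟨0, by omega⟩, ⟨1, by omega⟩), by simp⟩
  rw [Ofun, aztecO, prod_mul_distrib, prod_const, ← pow_sub_one_mul hL]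
  ring

lemma Ofun_of_le_one (hn : n ≤ 1) (a : Fin n → ℕ) : Ofun n a = 2 ^ n := by
  interval_cases n
  · simp [Ofun]
  · simp [Ofun, Fin.lt_def]

lemma exists_int_Ofun_eq (a : Fin n → ℕ) : ∃ z : ℤ, Ofun n a = z := by
  rcases le_or_gt n 1 with hn | hn
  · exact ⟨2 ^ n, by rw [Ofun_of_le_one hn]; push_cast; rfl⟩
  · obtain ⟨z, hz⟩ := exists_int_aztecO_eq a
    refine ⟨z * (∏ p ∈ univ.filter (fun p : Fin n × Fin n => p.1 ≤ p.2), ((a p.1 : ℤ) + a p.2 - 1))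
      ^ (#(univ.filter fun p : Fin n × Fin n => p.1 < p.2) - 1), ?_⟩
    rw [Ofun_eq_aztecO_mul_pow hn, hz]
    push_cast
    rfl

lemma Ofun_pos (a : Fin n → ℕ) (hpos : ∀ i, 0 < a i) (hmono : StrictMono a) : 0 < Ofun n a := by
  refine mul_pos (by positivity) (prod_pos fun p hp => mul_pos ?_ (prod_pos fun q _ => ?_))
  · have h : a p.1 < a p.2 := hmono (mem_filter.1 hp).2
    rw [sub_pos]
    exact_mod_cast h
  · have h1 : (1 : ℚ) ≤ a q.1 := by exact_mod_cast hpos q.1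
    have h2 : (1 : ℚ) ≤ a q.2 := by exact_mod_cast hpos q.2
    linarith

end

theorem Ofun_pos_int (n : ℕ) (a : Fin n → ℕ) (hpos : ∀ i, 0 < a i) (hmono : StrictMono a) :
    ∃ k : ℕ, 0 < k ∧ Ofun n a = (k : ℚ) := by
  obtain ⟨z, hz⟩ := exists_int_Ofun_eq a
  have hz_pos : 0 < z := by exact_mod_cast hz ▸ Ofun_pos a hpos hmono
  exact ⟨z.toNat, by omega, by rw [hz]; exact_mod_cast (Int.toNat_of_nonneg hz_pos.le).symm⟩
end

section
/- For any strictly increasing sequence of positive integers a_1 < a_2 < ... < a_n, the quantity 2^{-n} · Ē(a_1,...,a_n), where Ē(a_1,...,a_n) = 2^{n^2}·(∏_{i=1}^n a_i) / (0!·2!·4!···(2n-2)!) · ∏_{1≤i<j≤n}(a_j - a_i) · ∏_{1≤i≤j≤n}(a_i + a_j), is a positive integer. -/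
/-! The integrality rests on `∏_{i<n} (2i)! ∣ (∏ aᵢ) · det (aᵢ^(2j))`, the determinant being
`∏_{i<j} (a_j - a_i)(a_i + a_j)`. Replacing the columns `x^(2j)` by the monic polynomials
`q_j(x²) = ∏_{t<j} (x² - (t+1)²)` does not change the determinant, and after multiplying
row `i` by `aᵢ` the entry `aᵢ q_j(aᵢ²)` is a product of the `2j+1` consecutive integers
`aᵢ - j, …, aᵢ + j`, hence divisible by `(2j+1)!`. All other factors of `Ebar n a / 2ⁿ` are
integers, and positivity comes from `a` being positive and strictly increasing. -/

open Finset

/-- The function `Ē(a_1,...,a_n)` of the paper. -/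
noncomputable def Ebar (n : ℕ) (a : Fin n → ℕ) : ℚ :=
  (2 ^ (n ^ 2) * (∏ i : Fin n, (a i : ℚ)) / ∏ i ∈ Finset.range n, (Nat.factorial (2 * i) : ℚ))
    * ∏ p ∈ Finset.univ.filter (fun p : Fin n × Fin n => p.1 < p.2), ((a p.2 : ℚ) - (a p.1 : ℚ))
    * ∏ p ∈ Finset.univ.filter (fun p : Fin n × Fin n => p.1 ≤ p.2),
        ((a p.1 : ℚ) + (a p.2 : ℚ))

open Polynomial

theorem factorial_dvd_descPochhammer_eval (m : ℕ) (x : ℤ) :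
    (m.factorial : ℤ) ∣ (descPochhammer ℤ m).eval x :=
  ⟨Ring.choose x m, by
    rw [eval_eq_smeval, Ring.descPochhammer_eq_factorial_smul_choose, nsmul_eq_mul]⟩

theorem mul_prod_sq_sub_sq_eq_descPochhammer_eval {R : Type*} [CommRing R] (x : R) (j : ℕ) :
    x * ∏ t ∈ range j, (x ^ 2 - ((t : R) + 1) ^ 2) =
      (descPochhammer R (2 * j + 1)).eval (x + j) := by
  induction j with
  | zero => simp [descPochhammer_one]
  | succ j ih =>
    rw [show 2 * (j + 1) + 1 = 2 * j + 1 + 1 + 1 by ring, descPochhammer_succ_left, eval_mul,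
      eval_comp, descPochhammer_succ_eval, prod_range_succ, ← mul_assoc, ih]
    simp only [eval_X, eval_sub, eval_one, Nat.cast_succ, ← add_assoc, add_sub_cancel_right]
    push_cast
    ring

theorem prod_dvd_det_of_dvd {R n : Type*} [CommRing R] [Fintype n] [DecidableEq n]
    (c : n → R) (M : Matrix n n R) (h : ∀ i j, c j ∣ M i j) : (∏ j, c j) ∣ M.det := by
  choose M' hM' using h
  have : M = Matrix.of fun i j => c j * M' i j := Matrix.ext hM'
  exact ⟨_, this ▸ Matrix.det_mul_row c _⟩

theorem prod_factorial_dvd_mul_det_vandermonde_sq {n : ℕ} (x : Fin n → ℤ) :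
    ∏ j : Fin n, ((2 * (j : ℕ) + 1).factorial : ℤ) ∣
      (∏ i, x i) * (Matrix.vandermonde fun i => x i ^ 2).det := by
  let q : Fin n → ℤ[X] := fun j => ∏ t ∈ range j, (X - C (((t : ℤ) + 1) ^ 2))
  have hmonic (j : Fin n) : (q j).Monic := monic_prod_of_monic _ _ fun t _ => monic_X_sub_C _
  have hdeg (j : Fin n) : (q j).natDegree = j := by
    rw [natDegree_finsetProd_X_sub_C_eq_card, card_range]
  rw [Matrix.det_eval_matrixOfPolynomials_eq_det_vandermonde _ q hdeg hmonic,
    ← Matrix.det_mul_column]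
  refine prod_dvd_det_of_dvd _ _ fun i j => ?_
  simpa [q, eval_prod, mul_prod_sq_sub_sq_eq_descPochhammer_eval] using
    factorial_dvd_descPochhammer_eval (2 * (j : ℕ) + 1) (x i + j)

theorem det_vandermonde_sq {R : Type*} [CommRing R] {n : ℕ} (x : Fin n → R) :
    (Matrix.vandermonde fun i => x i ^ 2).det =
      (∏ i, ∏ j ∈ Ioi i, (x j - x i)) * ∏ i, ∏ j ∈ Ioi i, (x i + x j) := by
  simp only [Matrix.det_vandermonde, ← prod_mul_distrib]
  exact prod_congr rfl fun i _ => prod_congr rfl fun j _ => by ring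

theorem prod_factorial_two_mul_dvd {n : ℕ} (x : Fin n → ℤ) :
    ∏ i ∈ range n, ((2 * i).factorial : ℤ) ∣
      (∏ i, x i) * ((∏ i, ∏ j ∈ Ioi i, (x j - x i)) * ∏ i, ∏ j ∈ Ioi i, (x i + x j)) := by
  rw [← det_vandermonde_sq, ← Fin.prod_univ_eq_prod_range (fun i => ((2 * i).factorial : ℤ))]
  refine dvd_trans (prod_dvd_prod_of_dvd _ _ fun j _ => ?_)
    (prod_factorial_dvd_mul_det_vandermonde_sq x)
  exact_mod_cast Nat.factorial_dvd_factorial (Nat.le_succ _)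

theorem prod_filter_lt {ι M : Type*} [CommMonoid M] [Fintype ι] [LinearOrder ι]
    [LocallyFiniteOrderTop ι] (f : ι → ι → M) :
    ∏ p ∈ univ.filter (fun p : ι × ι => p.1 < p.2), f p.1 p.2 = ∏ i, ∏ j ∈ Ioi i, f i j := by
  rw [prod_filter, ← univ_product_univ, prod_product]
  exact prod_congr rfl fun i _ => by rw [← prod_filter, filter_lt_eq_Ioi]

theorem prod_filter_le {ι M : Type*} [CommMonoid M] [Fintype ι] [LinearOrder ι]
    [LocallyFiniteOrderTop ι] (f : ι → ι → M) :
    ∏ p ∈ univ.filter (fun p : ι × ι => p.1 ≤ p.2), f p.1 p.2 = ∏ i, ∏ j ∈ Ici i, f i j := by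
  rw [prod_filter, ← univ_product_univ, prod_product]
  exact prod_congr rfl fun i _ => by rw [← prod_filter, filter_le_eq_Ici]

theorem prod_Ici_add {ι R : Type*} [CommSemiring R] [Fintype ι] [LinearOrder ι]
    [LocallyFiniteOrderTop ι] (x : ι → R) :
    ∏ i, ∏ j ∈ Ici i, (x i + x j) =
      2 ^ Fintype.card ι * (∏ i, x i) * ∏ i, ∏ j ∈ Ioi i, (x i + x j) := by
  simp only [Ici_eq_cons_Ioi, prod_cons, ← two_mul, prod_mul_distrib, prod_const, card_univ]

theorem StrictMono.prod_Ioi_sub_pos {ι R : Type*} [Fintype ι] [LinearOrder ι]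
    [LocallyFiniteOrderTop ι] [CommRing R] [PartialOrder R] [IsStrictOrderedRing R] {x : ι → R}
    (hx : StrictMono x) : 0 < ∏ i, ∏ j ∈ Ioi i, (x j - x i) :=
  prod_pos fun _ _ => prod_pos fun _ hj => sub_pos.mpr (hx (mem_Ioi.mp hj))

-- The product over `p.1 ≤ p.2` in `Ebar` lies in the scope of the product over `p.1 < p.2`.
theorem Ebar_eq (n : ℕ) (a : Fin n → ℕ) :
    Ebar n a = (2 ^ (n ^ 2) * (∏ i, (a i : ℚ)) / ∏ i ∈ range n, ((2 * i).factorial : ℚ))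
      * (∏ i, ∏ j ∈ Ioi i, ((a j : ℚ) - a i))
      * (2 ^ n * (∏ i, (a i : ℚ)) * ∏ i, ∏ j ∈ Ioi i, ((a i : ℚ) + a j))
        ^ #(univ.filter fun p : Fin n × Fin n => p.1 < p.2) := by
  rw [Ebar, prod_mul_distrib, prod_const, prod_filter_lt (fun i j => (a j : ℚ) - a i),
    prod_filter_le (fun i j => (a i : ℚ) + a j), prod_Ici_add, Fintype.card_fin]
  ring

theorem Ebar_div_pow_pos_int (n : ℕ) (a : Fin n → ℕ) (hpos : ∀ i, 0 < a i)
    (hmono : StrictMono a) :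
    ∃ k : ℕ, 0 < k ∧ Ebar n a / 2 ^ n = (k : ℚ) := by
  obtain hn | hn := lt_or_ge n 2
  · interval_cases n
    · exact ⟨1, one_pos, by simp [Ebar]⟩
    · exact ⟨a 0, hpos 0, by simp [Ebar, Subsingleton.elim _ (0 : Fin 1)]⟩
  set F : ℤ := ∏ i ∈ range n, ((2 * i).factorial : ℤ)
  set P : ℤ := ∏ i, (a i : ℤ)
  set V : ℤ := ∏ i, ∏ j ∈ Ioi i, ((a j : ℤ) - a i)
  set W : ℤ := ∏ i, ∏ j ∈ Ioi i, ((a i : ℤ) + a j)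
  obtain ⟨m, hm⟩ : F ∣ P * (V * W) := prod_factorial_two_mul_dvd fun i => (a i : ℤ)
  have hP : 0 < P := prod_pos fun i _ => mod_cast hpos i
  have hV : 0 < V := (Nat.strictMono_cast.comp hmono).prod_Ioi_sub_pos
  have hW : 0 < W := prod_pos fun i _ => prod_pos fun j _ =>
    add_pos (mod_cast hpos i) (mod_cast hpos j)
  have hF : 0 < F := prod_pos fun i _ => mod_cast (2 * i).factorial_pos
  have hm_pos : 0 < m := pos_of_mul_pos_right (hm ▸ (by positivity : 0 < P * (V * W))) hF.le
  obtain ⟨N, hN⟩ : ∃ N, #(univ.filter fun p : Fin n × Fin n => p.1 < p.2) = N + 1 :=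
    Nat.exists_eq_add_one.mpr <| card_pos.mpr ⟨(⟨0, by omega⟩, ⟨1, by omega⟩), by simp⟩
  have hk_pos : 0 < 2 ^ (n ^ 2) * m * P * (2 ^ n * P * W) ^ N := by positivity
  obtain ⟨k, hk⟩ := Int.eq_ofNat_of_zero_le hk_pos.le
  refine ⟨k, Int.natCast_pos.mp (hk ▸ hk_pos), ?_⟩
  have hmQ : ((P * (V * W) : ℤ) : ℚ) = (F * m : ℤ) := congrArg _ hm
  rw [Ebar_eq, hN, ← Int.cast_natCast, ← hk]
  push_cast [P, V, W, F] at hmQ ⊢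
  field_simp
  linear_combination (∏ i, (a i : ℚ)) * 2 ^ n
    * ((∏ i, (a i : ℚ)) * 2 ^ n * ∏ i, ∏ j ∈ Ioi i, ((a i : ℚ) + a j)) ^ N * hmQ
end

section
/- Let G be a finite weighted graph containing a 7-vertex subgraph H consisting of two 4-cycles sharing a common vertex a, with 4-cycles a, b_1, b_2, b_3 and a, c_1, c_2, c_3 (in cyclic order), such that b_3 and c_3 are the only vertices of H having neighbors outside H, and such that in each 4-cycle the products of the weights of opposite edges are equal. Let G' be the graph obtained from G by deleting b_1, b_2, c_1, c_2 (with edge weights restricted). Then M(G) = 2 · wt(b_1 b_2) · wt(c_1 c_2) · M(G'), where M denotes the weighted count of perfect matchings. -/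
open Finset
open scoped Classical

/-- `M` is a perfect matching of `G`. -/
def SimpleGraph.IsPM {V : Type} (G : SimpleGraph V) (M : Finset (Sym2 V)) : Prop :=
  (∀ e ∈ M, e ∈ G.edgeSet) ∧ ∀ v : V, ∃! e, e ∈ M ∧ v ∈ e

/-- The weighted count of perfect matchings of `G`. -/
noncomputable def matchSum {V : Type} [Fintype V] [DecidableEq V]
    (G : SimpleGraph V) (wt : Sym2 V → ℚ) : ℚ :=
  ∑ M ∈ Finset.univ.filter (fun M : Finset (Sym2 V) => G.IsPM M), ∏ e ∈ M, wt e

/-!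
Sort the perfect matchings of `G` by the partner of `a`. If `a` is matched into the `b`-cycle,
then `c₁` must be matched to `c₂` and the rest of the `b`-cycle is forced: `a b₃` forces `b₁ b₂`,
while `a b₁` forces `b₂ b₃`. Deleting the three forced edges leaves, in both cases, a perfect
matching of `G - {a, b₁, b₂, b₃, c₁, c₂}`, and the condition on opposite edges makes the two
weights equal. In `G'` the vertex `a` can only be matched to `b₃` or `c₃`, and deleting that edge
leads to the same graph; this gives the factor `2 · wt(b₁b₂) · wt(c₁c₂)`.
-/

theorem Finset.existsUnique_mem_map {α β : Type*} {f : α ↪ β} {s : Finset α} {p : β → Prop} :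
    (∃! b, b ∈ s.map f ∧ p b) ↔ ∃! a, a ∈ s ∧ p (f a) := by
  constructor
  · rintro ⟨b, ⟨hb, hpb⟩, hu⟩
    obtain ⟨a, ha, rfl⟩ := mem_map.1 hb
    exact ⟨a, ⟨ha, hpb⟩, fun a' ⟨ha', hpa'⟩ => f.injective (hu _ ⟨mem_map_of_mem f ha', hpa'⟩)⟩
  · rintro ⟨a, ⟨ha, hpa⟩, hu⟩
    refine ⟨f a, ⟨mem_map_of_mem f ha, hpa⟩, fun b ⟨hb, hpb⟩ => ?_⟩
    obtain ⟨a', ha', rfl⟩ := mem_map.1 hb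
    rw [hu a' ⟨ha', hpb⟩]

open Function

namespace SimpleGraph

section

variable {V : Type} {G : SimpleGraph V} {S U T T' : Set V} {M N F : Finset (Sym2 V)}
  {v x y z : V} {e f : Sym2 V}

def IsPMOn (G : SimpleGraph V) (U : Set V) (M : Finset (Sym2 V)) : Prop :=
  (∀ e ∈ M, e ∈ G.edgeSet) ∧ (∀ e ∈ M, ∀ v ∈ e, v ∈ U) ∧ ∀ v ∈ U, ∃! e, e ∈ M ∧ v ∈ e

theorem isPMOn_univ : G.IsPMOn Set.univ M ↔ G.IsPM M := by
  simp [IsPMOn, IsPM]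

theorem isPMOn_pair (h : G.Adj x y) : G.IsPMOn {x, y} {s(x, y)} :=
  ⟨by simpa using h, by simp, fun v hv =>
    ⟨s(x, y), ⟨mem_singleton_self _, by simpa using hv⟩, fun _ hf => mem_singleton.1 hf.1⟩⟩

namespace IsPMOn

theorem mem_of_mem (h : G.IsPMOn U M) (he : e ∈ M) (hv : v ∈ e) : v ∈ U :=
  h.2.1 e he v hv

theorem eq_of_mem (h : G.IsPMOn U M) (he : e ∈ M) (hf : f ∈ M) (hve : v ∈ e) (hvf : v ∈ f) :
    e = f :=
  (h.2.2 v (h.mem_of_mem he hve)).unique ⟨he, hve⟩ ⟨hf, hvf⟩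

theorem exists_adj (h : G.IsPMOn U M) (hv : v ∈ U) :
    ∃ w, s(v, w) ∈ M ∧ G.Adj v w ∧ w ∈ U := by
  obtain ⟨e, ⟨he, hve⟩, -⟩ := h.2.2 v hv
  obtain ⟨w, rfl⟩ := Sym2.mem_iff_exists.1 hve
  exact ⟨w, he, h.1 _ he, h.mem_of_mem he (Sym2.mem_mk_right v w)⟩

theorem mem_of_forall_adj (h : G.IsPMOn U M) (hy : y ∈ U)
    (hN : ∀ w, G.Adj y w → w = x ∨ w = z) (he : e ∈ M) (hxe : x ∈ e) (hye : y ∉ e) :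
    s(y, z) ∈ M := by
  obtain ⟨w, hw, hyw, -⟩ := h.exists_adj hy
  rcases hN w hyw with rfl | rfl
  · exact absurd (h.eq_of_mem hw he (Sym2.mem_mk_right y w) hxe ▸ Sym2.mem_mk_left y w) hye
  · exact hw

theorem disjoint (h : G.IsPMOn T M) (h' : G.IsPMOn T' N) (hT : Disjoint T T') :
    Disjoint M N :=
  Finset.disjoint_left.2 fun e he he' =>
    hT.ne_of_mem (h.mem_of_mem he e.out_fst_mem) (h'.mem_of_mem he' e.out_fst_mem) rfl

theorem existsUnique_mem_union [DecidableEq V] (h : G.IsPMOn T M) (h' : G.IsPMOn T' N)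
    (hT : Disjoint T T') (hv : v ∈ T) : ∃! e, e ∈ M ∪ N ∧ v ∈ e :=
  (h.2.2 v hv).imp fun _ he => ⟨⟨mem_union_left _ he.1.1, he.1.2⟩, fun f ⟨hf, hvf⟩ =>
    he.2 f ⟨(mem_union.1 hf).resolve_right fun hfN =>
      hT.ne_of_mem hv (h'.mem_of_mem hfN hvf) rfl, hvf⟩⟩

theorem union [DecidableEq V] (h : G.IsPMOn T M) (h' : G.IsPMOn T' N) (hT : Disjoint T T') :
    G.IsPMOn (T ∪ T') (M ∪ N) := by
  refine ⟨?_, ?_, ?_⟩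
  · simp only [mem_union]
    rintro e (he | he)
    exacts [h.1 e he, h'.1 e he]
  · simp only [mem_union]
    rintro e (he | he) v hv
    exacts [Or.inl (h.mem_of_mem he hv), Or.inr (h'.mem_of_mem he hv)]
  · rintro v (hv | hv)
    · exact h.existsUnique_mem_union h' hT hv
    · simpa only [union_comm M] using h'.existsUnique_mem_union h hT.symm hv

theorem sdiff [DecidableEq V] (h : G.IsPMOn U M) (hF : G.IsPMOn T F) (hFM : F ⊆ M) :
    G.IsPMOn (U \ T) (M \ F) := by
  refine ⟨fun e he => h.1 e (mem_sdiff.1 he).1, fun e he v hv => ?_, fun v hv => ?_⟩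
  · obtain ⟨heM, heF⟩ := mem_sdiff.1 he
    refine ⟨h.mem_of_mem heM hv, fun hvT => heF ?_⟩
    obtain ⟨f, ⟨hf, hvf⟩, -⟩ := hF.2.2 v hvT
    exact h.eq_of_mem heM (hFM hf) hv hvf ▸ hf
  · obtain ⟨e, ⟨he, hve⟩, huniq⟩ := h.2.2 v hv.1
    refine ⟨e, ⟨mem_sdiff.2 ⟨he, fun heF => hv.2 (hF.mem_of_mem heF hve)⟩, hve⟩, ?_⟩
    exact fun f ⟨hf, hvf⟩ => huniq f ⟨(mem_sdiff.1 hf).1, hvf⟩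

end IsPMOn

theorem isPM_induce_iff {M : Finset (Sym2 S)} :
    (G.induce S).IsPM M ↔ G.IsPMOn S (M.map (Embedding.subtype (· ∈ S)).sym2Map) := by
  have hedge (e : Sym2 S) : Sym2.map Subtype.val e ∈ G.edgeSet ↔ e ∈ (G.induce S).edgeSet := by
    induction e using Sym2.ind; simp
  have hmem (e : Sym2 S) (v : V) (hv : v ∈ S) : v ∈ Sym2.map Subtype.val e ↔ ⟨v, hv⟩ ∈ e := by
    simp [Sym2.mem_map, hv]
  simp only [IsPM, IsPMOn, forall_mem_map, existsUnique_mem_map, Embedding.sym2Map_apply,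
    Embedding.coe_subtype, hedge]
  refine and_congr_right fun _ => ⟨fun h => ⟨?_, fun v hv => ?_⟩, fun h v => ?_⟩
  · rintro e - v hv
    obtain ⟨u, -, rfl⟩ := Sym2.mem_map.1 hv
    exact u.2
  · simpa only [hmem _ v hv] using h ⟨v, hv⟩
  · simpa only [hmem _ v v.2] using h.2 v v.2

end

section

variable {V : Type} [Fintype V] {G : SimpleGraph V} {U T : Set V}
  {F : Finset (Sym2 V)} {v x y : V}

noncomputable def matchSumOn (G : SimpleGraph V) (wt : Sym2 V → ℚ) (U : Set V) : ℚ :=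
  ∑ M ∈ univ.filter (G.IsPMOn U), ∏ e ∈ M, wt e

theorem matchSum_induce {S : Set V} [Fintype S] [DecidableEq S] (wt : Sym2 V → ℚ) :
    matchSum (G.induce S) (fun f => wt (Sym2.map Subtype.val f)) = G.matchSumOn wt S := by
  set φ := (Embedding.subtype (· ∈ S)).sym2Map
  have himage : univ.filter (G.IsPMOn S)
      = (univ.filter (G.induce S).IsPM).map (mapEmbedding φ).toEmbedding := by
    ext N
    simp only [mem_filter, mem_univ, true_and, mem_map, RelEmbedding.coe_toEmbedding,
      mapEmbedding_apply]
    refine ⟨fun hN => ?_, fun ⟨M, hM, hMN⟩ => hMN ▸ isPM_induce_iff.1 hM⟩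
    have hNφ : N ⊆ univ.map φ := by
      intro e he
      induction e using Sym2.ind with
      | _ x y =>
        exact mem_map.2 ⟨s(⟨x, hN.mem_of_mem he (Sym2.mem_mk_left x y)⟩,
          ⟨y, hN.mem_of_mem he (Sym2.mem_mk_right x y)⟩), mem_univ _, rfl⟩
    obtain ⟨M, -, rfl⟩ := subset_map_iff.1 hNφ
    exact ⟨M, isPM_induce_iff.2 hN, rfl⟩
  rw [matchSum, matchSumOn, himage, sum_map]
  simp [φ, prod_map]

variable [DecidableEq V]

theorem matchSum_eq_matchSumOn_univ (wt : Sym2 V → ℚ) :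
    matchSum G wt = G.matchSumOn wt Set.univ := by
  simp only [matchSum, matchSumOn, isPMOn_univ]

theorem sum_isPMOn_of_subset (wt : Sym2 V → ℚ) (hTU : T ⊆ U) (hF : G.IsPMOn T F) :
    ∑ M ∈ univ.filter (fun M => G.IsPMOn U M ∧ F ⊆ M), ∏ e ∈ M, wt e
      = (∏ e ∈ F, wt e) * G.matchSumOn wt (U \ T) := by
  have hdisj {N} (hN : G.IsPMOn (U \ T) N) : Disjoint N F :=
    hN.disjoint hF Set.disjoint_sdiff_left
  rw [matchSumOn, mul_sum]
  refine sum_nbij' (· \ F) (· ∪ F) ?_ ?_ ?_ ?_ ?_ <;>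
    simp only [mem_filter, mem_univ, true_and, and_imp]
  · exact fun M hM hFM => hM.sdiff hF hFM
  · refine fun N hN => ⟨?_, subset_union_right⟩
    simpa [Set.sdiff_union_of_subset hTU] using hN.union hF Set.disjoint_sdiff_left
  · exact fun M _ hFM => sdiff_union_of_subset hFM
  · exact fun N hN => union_sdiff_cancel_right (hdisj hN)
  · exact fun M _ hFM => by rw [← prod_sdiff hFM, mul_comm]

theorem sum_isPMOn_mem (wt : Sym2 V → ℚ) (h : G.Adj x y) (hx : x ∈ U) (hy : y ∈ U) :
    ∑ M ∈ univ.filter (fun M => G.IsPMOn U M ∧ s(x, y) ∈ M), ∏ e ∈ M, wt e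
      = wt s(x, y) * G.matchSumOn wt (U \ {x, y}) := by
  simpa using sum_isPMOn_of_subset wt (Set.insert_subset hx (Set.singleton_subset_iff.2 hy))
    (isPMOn_pair h)

theorem matchSumOn_eq_sum_partner (wt : Sym2 V → ℚ) (hv : v ∈ U) {W : Finset V}
    (hW : ∀ w ∈ U, G.Adj v w → w ∈ W) :
    G.matchSumOn wt U
      = ∑ w ∈ W, ∑ M ∈ univ.filter (fun M => G.IsPMOn U M ∧ s(v, w) ∈ M), ∏ e ∈ M, wt e := by
  rw [matchSumOn, ← sum_biUnion]
  · congr 1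
    ext M
    simp only [mem_filter, mem_univ, true_and, mem_biUnion]
    refine ⟨fun hM => ?_, fun ⟨w, _, hM, _⟩ => hM⟩
    obtain ⟨w, hwM, hvw, hw⟩ := hM.exists_adj hv
    exact ⟨w, hW w hw hvw, hM, hwM⟩
  · intro w _ w' _ hww'
    refine Finset.disjoint_left.2 fun M hM hM' => hww' ?_
    simp only [mem_filter] at hM hM'
    exact Sym2.congr_right.1 (hM.2.1.eq_of_mem hM.2.2 hM'.2.2 (Sym2.mem_mk_left _ _)
      (Sym2.mem_mk_left _ _))

theorem sum_isPMOn_mem_of_forced_pairs (wt : Sym2 V → ℚ) {a x y z c d p : V}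
    (hdist : [a, x, y, z, c, d].Pairwise (· ≠ ·)) (hU : {a, x, y, z, c, d} ⊆ U)
    (hax : G.Adj a x) (hyz : G.Adj y z) (hcd : G.Adj c d) (hp : p = a ∨ p = x)
    (hNy : ∀ w, G.Adj y w → w = p ∨ w = z) (hNc : ∀ w, G.Adj c w → w = a ∨ w = d) :
    ∑ M ∈ univ.filter (fun M => G.IsPMOn U M ∧ s(a, x) ∈ M), ∏ e ∈ M, wt e
      = wt s(a, x) * wt s(y, z) * wt s(c, d) * G.matchSumOn wt (U \ {a, x, y, z, c, d}) := by
  simp only [List.pairwise_cons, List.mem_cons, List.not_mem_nil, forall_eq_or_imp,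
    List.Pairwise.nil] at hdist
  obtain ⟨⟨-, hay, haz, hac, had, -⟩, ⟨hxy, hxz, hxc, hxd, -⟩, ⟨-, hyc, hyd, -⟩,
    ⟨hzc, hzd, -⟩, -⟩ := hdist
  have hdisj₁ : Disjoint ({y, z} : Set V) {c, d} := by simp [*, eq_comm]
  have hdisj₂ : Disjoint ({a, x} : Set V) ({y, z} ∪ {c, d}) := by simp [*, eq_comm]
  have hT : ({a, x} ∪ ({y, z} ∪ {c, d}) : Set V) = {a, x, y, z, c, d} := by
    simp only [Set.insert_union, Set.singleton_union]
  have hyzcd := (isPMOn_pair hyz).union (isPMOn_pair hcd) hdisj₁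
  have hF := hT ▸ (isPMOn_pair hax).union hyzcd hdisj₂
  have hforced (M) (hM : G.IsPMOn U M) (haxM : s(a, x) ∈ M) :
      {s(a, x)} ∪ ({s(y, z)} ∪ {s(c, d)}) ⊆ M := by
    have hyzM : s(y, z) ∈ M := hM.mem_of_forall_adj (hU (by simp)) hNy haxM
      (by rcases hp with rfl | rfl <;> simp) (by simp [Ne.symm hay, Ne.symm hxy])
    have hcdM : s(c, d) ∈ M := hM.mem_of_forall_adj (hU (by simp)) hNc haxM
      (Sym2.mem_mk_left a x) (by simp [Ne.symm hac, Ne.symm hxc])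
    simp [insert_subset_iff, *]
  rw [filter_congr fun M _ => and_congr_right fun hM =>
      ⟨hforced M hM, fun h => h (mem_union_left _ (mem_singleton_self _))⟩,
    sum_isPMOn_of_subset wt hU hF,
    prod_union ((isPMOn_pair hax).disjoint hyzcd hdisj₂),
    prod_union ((isPMOn_pair hyz).disjoint (isPMOn_pair hcd) hdisj₁)]
  simp only [prod_singleton, mul_assoc]

theorem sum_isPMOn_mem_add_mem_of_fourCycle (wt : Sym2 V → ℚ) {a b1 b2 b3 c1 c2 : V}
    (hdist : [a, b1, b2, b3, c1, c2].Pairwise (· ≠ ·)) (hU : {a, b1, b2, b3, c1, c2} ⊆ U)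
    (hab1 : G.Adj a b1) (hb12 : G.Adj b1 b2) (hb23 : G.Adj b2 b3) (hb3a : G.Adj b3 a)
    (hc12 : G.Adj c1 c2)
    (hNb1 : ∀ w, G.Adj b1 w → w = a ∨ w = b2) (hNb2 : ∀ w, G.Adj b2 w → w = b1 ∨ w = b3)
    (hNc1 : ∀ w, G.Adj c1 w → w = a ∨ w = c2)
    (hwb : wt s(a, b1) * wt s(b2, b3) = wt s(b1, b2) * wt s(b3, a)) :
    ∑ M ∈ univ.filter (fun M => G.IsPMOn U M ∧ s(a, b1) ∈ M), ∏ e ∈ M, wt e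
      + ∑ M ∈ univ.filter (fun M => G.IsPMOn U M ∧ s(a, b3) ∈ M), ∏ e ∈ M, wt e
      = 2 * wt s(b1, b2) * wt s(c1, c2) * ∑ N ∈ univ.filter
          (fun N => G.IsPMOn (U \ {b1, b2, c1, c2}) N ∧ s(a, b3) ∈ N), ∏ e ∈ N, wt e := by
  have hdist' : [a, b3, b1, b2, c1, c2].Pairwise (· ≠ ·) := by
    simp only [List.pairwise_cons, List.mem_cons, List.not_mem_nil, forall_eq_or_imp,
      List.Pairwise.nil] at hdist ⊢
    grind
  have hperm : ({a, b3, b1, b2, c1, c2} : Set V) = {a, b1, b2, b3, c1, c2} := by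
    rw [Set.insert_comm b3 b1, Set.insert_comm b3 b2]
  have hdiff : (U \ {b1, b2, c1, c2}) \ {a, b3} = U \ {a, b1, b2, b3, c1, c2} := by
    ext; simp; tauto
  have ha : a ∈ U \ {b1, b2, c1, c2} := ⟨hU (by simp), by simp at hdist ⊢; tauto⟩
  have hb3 : b3 ∈ U \ {b1, b2, c1, c2} := ⟨hU (by simp), by simp at hdist ⊢; tauto⟩
  rw [sum_isPMOn_mem_of_forced_pairs wt hdist hU hab1 hb23 hc12 (Or.inr rfl) hNb2 hNc1,
    sum_isPMOn_mem_of_forced_pairs wt hdist' (hperm ▸ hU) hb3a.symm hb12 hc12 (Or.inl rfl)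
      hNb1 hNc1, sum_isPMOn_mem wt hb3a.symm ha hb3, hperm, hdiff]
  rw [Sym2.eq_swap (a := b3)] at hwb
  linear_combination wt s(c1, c2) * G.matchSumOn wt (U \ {a, b1, b2, b3, c1, c2}) * hwb

end

end SimpleGraph

/-- Ciucu's lemma on two 4-cycles sharing a vertex `a`: if the 4-cycles are
`a,b₁,b₂,b₃` and `a,c₁,c₂,c₃`, only `b₃` and `c₃` have neighbors outside the
7-vertex subgraph, and in each 4-cycle the products of the weights of opposite
edges agree, then deleting `b₁,b₂,c₁,c₂` divides the matching count by
`2 · wt(b₁b₂) · wt(c₁c₂)`. -/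
theorem ciucu_two_four_cycles {V : Type} [Fintype V] [DecidableEq V]
    (G : SimpleGraph V) (wt : Sym2 V → ℚ)
    (a b1 b2 b3 c1 c2 c3 : V)
    (hdist : ([a, b1, b2, b3, c1, c2, c3] : List V).Pairwise (· ≠ ·))
    (hab1 : G.Adj a b1) (hb12 : G.Adj b1 b2) (hb23 : G.Adj b2 b3) (hb3a : G.Adj b3 a)
    (hac1 : G.Adj a c1) (hc12 : G.Adj c1 c2) (hc23 : G.Adj c2 c3) (hc3a : G.Adj c3 a)
    (hNa : ∀ w, G.Adj a w → w = b1 ∨ w = b3 ∨ w = c1 ∨ w = c3)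
    (hNb1 : ∀ w, G.Adj b1 w → w = a ∨ w = b2)
    (hNb2 : ∀ w, G.Adj b2 w → w = b1 ∨ w = b3)
    (hNc1 : ∀ w, G.Adj c1 w → w = a ∨ w = c2)
    (hNc2 : ∀ w, G.Adj c2 w → w = c1 ∨ w = c3)
    (hwb : wt s(a, b1) * wt s(b2, b3) = wt s(b1, b2) * wt s(b3, a))
    (hwc : wt s(a, c1) * wt s(c2, c3) = wt s(c1, c2) * wt s(c3, a)) :
    matchSum G wt
      = 2 * wt s(b1, b2) * wt s(c1, c2)
        * matchSum (G.induce {v : V | v ∉ ({b1, b2, c1, c2} : Set V)})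
            (fun f => wt (Sym2.map Subtype.val f)) := by
  have hdb : [a, b1, b2, b3, c1, c2].Pairwise (· ≠ ·) := hdist.sublist (by simp)
  have hdc : [a, c1, c2, c3, b1, b2].Pairwise (· ≠ ·) := by
    simp only [List.pairwise_cons, List.mem_cons, List.not_mem_nil, forall_eq_or_imp,
      List.Pairwise.nil] at hdist ⊢
    grind
  have hb := G.sum_isPMOn_mem_add_mem_of_fourCycle wt hdb (Set.subset_univ _) hab1 hb12 hb23 hb3a
    hc12 hNb1 hNb2 hNc1 hwb
  have hc := G.sum_isPMOn_mem_add_mem_of_fourCycle wt hdc (Set.subset_univ _) hac1 hc12 hc23 hc3a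
    hb12 hNc1 hNc2 hNb1 hwc
  have hS : {v : V | v ∉ ({b1, b2, c1, c2} : Set V)} = Set.univ \ {b1, b2, c1, c2} := by
    ext; simp
  have hcb : ({c1, c2, b1, b2} : Set V) = {b1, b2, c1, c2} := by
    ext; simp; tauto
  rw [hcb] at hc
  have ha : a ∈ Set.univ \ ({b1, b2, c1, c2} : Set V) := by simp at hdist ⊢; tauto
  rw [G.matchSum_eq_matchSumOn_univ, G.matchSumOn_eq_sum_partner wt (Set.mem_univ a)
      (W := {b1, b3, c1, c3}) (fun w _ h => by simpa using hNa w h),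
    sum_insert (by simp at hdist ⊢; tauto), sum_insert (by simp at hdist ⊢; tauto),
    sum_pair (by simp at hdist ⊢; tauto), G.matchSum_induce, hS,
    G.matchSumOn_eq_sum_partner wt ha (W := {b3, c3})
      (fun w hw h => by simp at hw ⊢; have := hNa w h; tauto),
    sum_pair (by simp at hdist ⊢; tauto)]
  linear_combination hb + hc
end
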